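/- Let α ∈ Inc(n), φ ∈ Hp(α(n)), and p ∈ {1,…,n}. Write {p_1 ≺ … ≺ p_m = p} for the ≼_{α*φ}-downset of p in increasing order, and {v_1 ≺ … ≺ v_ℓ = α(p)} for the ≼_φ-downset of α(p) in increasing order (so ℓ = dp_φ(α(p))). Then: (a) the function α^φ_p : {0,…,m} → ℕ defined by α^φ_p(0) = 0 and α^φ_p(i) = dp_φ(α(p_i)) is an inc-list of length m with α^φ_p(m) = ℓ; (b) for i ∈ {1,…,ℓ}, i is in the image of α^φ_p if and only if v_i is in the image of α; (c) if (α*φ)(p) = q ≥ 1, then m ≥ 2, the ≼_{α*φ}-downset of q is {p_1 ≺ … ≺ p_{m−1} = q}, and α^φ_q is the restriction of α^φ_p to {0,…,m−1}. -/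
import Mathlib


/-! ### Min-heaps and inc-lists: basic combinatorics -/

/-- Auxiliary fuelled computation of the depth of a node in a min-heap. -/
def dpAux (φ : ℕ → ℕ) : ℕ → ℕ → ℕ
  | 0, _ => 0
  | fuel + 1, i => if i = 0 then 0 else dpAux φ fuel (φ i) + 1

/-- The depth `dp φ i` of `i` in the min-heap `φ`: for a min-heap and `i ≥ 1`
this is the least `k ≥ 1` with `φ^[k] i = 0`. -/
def dp (φ : ℕ → ℕ) (i : ℕ) : ℕ := dpAux φ i i

/-- The order relation `i ≼_φ j` associated to a min-heap `φ`:
`i ≼_φ j` iff `i = φ^k(j)` for some `k ≥ 0`. -/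
def hle (φ : ℕ → ℕ) (i j : ℕ) : Prop := ∃ k, i = φ^[k] j

/-- `φ` is a min-heap of size `n`: `φ 0 = 0` and `φ i < i` for `i ∈ {1,…,n}`.
(The behaviour of `φ` outside `{0,…,n}` is irrelevant.) -/
def IsHeap (n : ℕ) (φ : ℕ → ℕ) : Prop :=
  φ 0 = 0 ∧ ∀ i, 1 ≤ i → i ≤ n → φ i < i

/-- A normalised min-heap of size `n`: additionally `φ i = 0` outside `{0,…,n}`,
so that normalised heaps correspond bijectively to functions `{0,…,n} → {0,…,n}`. -/
def IsHeapN (n : ℕ) (φ : ℕ → ℕ) : Prop :=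
  IsHeap n φ ∧ ∀ i, n < i → φ i = 0

/-- `α` is an inc-list of length `n`: `α 0 = 0` and `α` is strictly increasing
on `{0,…,n}`. -/
def IsInc (n : ℕ) (α : ℕ → ℕ) : Prop :=
  α 0 = 0 ∧ ∀ i j, i < j → j ≤ n → α i < α j

/-- A normalised inc-list of length `n`: additionally `α i = 0` outside `{0,…,n}`. -/
def IsIncN (n : ℕ) (α : ℕ → ℕ) : Prop :=
  IsInc n α ∧ ∀ i, n < i → α i = 0

/-- `φ` is a `ψ`-compatible family of heaps for `ψ ∈ Hp(n)`:
`φ i ∈ Hp(dp_ψ(i))` for each `i ∈ {1,…,n}`, and whenever `ψ i = j ≥ 1`,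
`φ j` is the restriction of `φ i` to `{0,…,dp_ψ(i) − 1}`. -/
def CompatFam (n : ℕ) (ψ : ℕ → ℕ) (φ : ℕ → ℕ → ℕ) : Prop :=
  (∀ i, 1 ≤ i → i ≤ n → IsHeap (dp ψ i) (φ i)) ∧
  (∀ i, 1 ≤ i → i ≤ n → 1 ≤ ψ i → ∀ j, j ≤ dp ψ i - 1 → φ (ψ i) j = φ i j)

/-- The heap `ψ⋆φ` obtained from `ψ ∈ Hp(n)` and a `ψ`-compatible family `φ`:
`(ψ⋆φ)(0) = 0` and `(ψ⋆φ)(i) = ψ^[dp_ψ(i) − φ_i(dp_ψ(i))](i)`. -/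
def star (ψ : ℕ → ℕ) (φ : ℕ → ℕ → ℕ) (i : ℕ) : ℕ :=
  if i = 0 then 0 else ψ^[dp ψ i - φ i (dp ψ i)] i

/-- `r` is a partial order on `{1,…,n}`, contained in the natural order,
in which every downset is linearly ordered. -/
def GoodOrder (n : ℕ) (r : ℕ → ℕ → Prop) : Prop :=
  (∀ i j, r i j → 1 ≤ i ∧ j ≤ n) ∧
  (∀ i, 1 ≤ i → i ≤ n → r i i) ∧
  (∀ i j k, r i j → r j k → r i k) ∧
  (∀ i j, r i j → r j i → i = j) ∧
  (∀ i j, r i j → i ≤ j) ∧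
  (∀ i j l, r i l → r j l → r i j ∨ r j i)

/-- The order relation on `{1,…,n}` associated to a min-heap of size `n`. -/
def heapRel (n : ℕ) (φ : ℕ → ℕ) (i j : ℕ) : Prop := 1 ≤ i ∧ j ≤ n ∧ hle φ i j

open Classical in
/-- The min-heap `α*φ` associated to an inc-list `α ∈ Inc(n)` and a heap
`φ ∈ Hp(α(n))`, given by the explicit formula
`(α*φ)(j) = max { i ∈ {0,…,j−1} : i = 0 or α(i) ≼_φ α(j) }`. -/
noncomputable def astar (α φ : ℕ → ℕ) (j : ℕ) : ℕ :=
  if j = 0 then 0 else Nat.findGreatest (fun i => 1 ≤ i ∧ hle φ (α i) (α j)) (j - 1)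

/-- The inc-list `α^φ_p` of Definition "projection-free": with
`{p_1 ≺ … ≺ p_m = p}` the `≼_{α*φ}`-downset of `p` (so `p_i = (α*φ)^[m−i](p)`),
`α^φ_p(i) = dp_φ(α(p_i))`. -/
noncomputable def aphiFam (α φ : ℕ → ℕ) (p i : ℕ) : ℕ :=
  if i = 0 then 0 else dp φ (α ((astar α φ)^[dp (astar α φ) p - i] p))


section Lemmas
variable {N : ℕ} {φ : ℕ → ℕ}

lemma dpAux_zero (φ : ℕ → ℕ) (fuel : ℕ) : dpAux φ fuel 0 = 0 := by
  cases fuel <;> simp [dpAux]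

lemma dp_zero (φ : ℕ → ℕ) : dp φ 0 = 0 := rfl

lemma heap_lt (h : IsHeap N φ) {i : ℕ} (hi : i ≤ N) : φ i ≤ N ∧ φ i ≤ i := by
  rcases Nat.eq_zero_or_pos i with rfl | h1
  · simp [h.1]
  · have := h.2 i h1 hi; omega

lemma dpAux_eq (h : IsHeap N φ) : ∀ i, i ≤ N → ∀ fuel, i ≤ fuel →
    dpAux φ fuel i = dp φ i := by
  intro i
  induction i using Nat.strong_induction_on with
  | _ i IH =>
    intro hiN fuel hfuel
    rcases Nat.eq_zero_or_pos i with rfl | h1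
    · simp [dpAux_zero, dp_zero]
    · obtain ⟨f, rfl⟩ : ∃ f, fuel = f + 1 := ⟨fuel - 1, by omega⟩
      have hlt := h.2 i h1 hiN
      have hφN : φ i ≤ N := by omega
      have hne : ¬ i = 0 := by omega
      have e1 : dpAux φ (f + 1) i = dpAux φ f (φ i) + 1 := by
        simp [dpAux, hne]
      obtain ⟨g, hg⟩ : ∃ g, i = g + 1 := ⟨i - 1, by omega⟩
      have e2 : dp φ i = dpAux φ g (φ i) + 1 := by
        rw [dp, hg]; simp only [dpAux, Nat.succ_ne_zero, if_false]
      rw [e1, e2, IH (φ i) (by omega) hφN f (by omega),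
        IH (φ i) (by omega) hφN g (by omega)]

lemma dp_succ (h : IsHeap N φ) {i : ℕ} (h1 : 1 ≤ i) (hiN : i ≤ N) :
    dp φ i = dp φ (φ i) + 1 := by
  have hlt := h.2 i h1 hiN
  obtain ⟨g, hg⟩ : ∃ g, i = g + 1 := ⟨i - 1, by omega⟩
  have e2 : dp φ i = dpAux φ g (φ i) + 1 := by
    rw [dp, hg]; simp only [dpAux, Nat.succ_ne_zero, if_false]
  rw [e2, dpAux_eq h (φ i) (by omega) g (by omega)]

lemma dp_pos (h : IsHeap N φ) {i : ℕ} (h1 : 1 ≤ i) (hiN : i ≤ N) :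
    1 ≤ dp φ i := by rw [dp_succ h h1 hiN]; omega

lemma dp_eq_zero_iff (h : IsHeap N φ) {i : ℕ} (hiN : i ≤ N) :
    dp φ i = 0 ↔ i = 0 := by
  constructor
  · intro hd; by_contra hne
    have := dp_pos h (by omega) hiN; omega
  · rintro rfl; rfl

lemma iter_le (h : IsHeap N φ) {i : ℕ} (hiN : i ≤ N) (k : ℕ) :
    φ^[k] i ≤ i := by
  induction k with
  | zero => simp
  | succ k IH =>
    rw [Function.iterate_succ_apply']
    have := heap_lt h (le_trans IH hiN)
    omega

lemma iter_dp (h : IsHeap N φ) {i : ℕ} (hiN : i ≤ N) :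
    ∀ k, k ≤ dp φ i → dp φ (φ^[k] i) = dp φ i - k := by
  intro k
  induction k with
  | zero => simp
  | succ k IH =>
    intro hk
    have hk' : k ≤ dp φ i := by omega
    have hdk := IH hk'
    have hkN : φ^[k] i ≤ N := le_trans (iter_le h hiN k) hiN
    have hpos : 1 ≤ φ^[k] i := by
      by_contra hc
      have h0 : φ^[k] i = 0 := by omega
      rw [h0, dp_zero] at hdk; omega
    rw [Function.iterate_succ_apply', dp_succ h hpos hkN] at *
    omega

lemma iter_dp_zero (h : IsHeap N φ) {i : ℕ} (hiN : i ≤ N) :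
    φ^[dp φ i] i = 0 := by
  have := iter_dp h hiN (dp φ i) le_rfl
  rw [Nat.sub_self] at this
  exact (dp_eq_zero_iff h (le_trans (iter_le h hiN _) hiN)).1 this

lemma iter_lt_dp (h : IsHeap N φ) {i k : ℕ} (hiN : i ≤ N)
    (hpos : 1 ≤ φ^[k] i) : k < dp φ i := by
  by_contra hc
  have : φ^[k] i = 0 := by
    have : φ^[k] i = φ^[k - dp φ i] (φ^[dp φ i] i) := by
      rw [← Function.iterate_add_apply]; congr 1; omega
    rw [this, iter_dp_zero h hiN, Function.iterate_fixed h.1]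
  omega

lemma hle_zero (h : IsHeap N φ) {i : ℕ} (hiN : i ≤ N) : hle φ 0 i :=
  ⟨dp φ i, (iter_dp_zero h hiN).symm⟩

lemma hle_refl (φ : ℕ → ℕ) (i : ℕ) : hle φ i i := ⟨0, rfl⟩

lemma hle_trans {a b c : ℕ} (h1 : hle φ a b) (h2 : hle φ b c) : hle φ a c := by
  obtain ⟨k, rfl⟩ := h1; obtain ⟨l, rfl⟩ := h2
  exact ⟨k + l, (Function.iterate_add_apply φ k l c).symm⟩

lemma hle_total {a b c : ℕ} (h1 : hle φ a c) (h2 : hle φ b c) :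
    hle φ a b ∨ hle φ b a := by
  obtain ⟨k, rfl⟩ := h1; obtain ⟨l, rfl⟩ := h2
  rcases le_total k l with hkl | hkl
  · right
    refine ⟨l - k, ?_⟩
    conv_lhs => rw [show l = (l - k) + k by omega]
    rw [Function.iterate_add_apply]
  · left
    refine ⟨k - l, ?_⟩
    conv_lhs => rw [show k = (k - l) + l by omega]
    rw [Function.iterate_add_apply]

lemma hle_le (h : IsHeap N φ) {u v : ℕ} (hv : v ≤ N) (huv : hle φ u v) :
    u ≤ v := by obtain ⟨k, rfl⟩ := huv; exact iter_le h hv k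

lemma hle_dp_lt (h : IsHeap N φ) {u v : ℕ} (hv : v ≤ N) (huv : hle φ u v)
    (hne : u ≠ v) : dp φ u < dp φ v := by
  obtain ⟨k, rfl⟩ := huv
  have hk : 1 ≤ k := by
    rcases Nat.eq_zero_or_pos k with rfl | h1
    · simp at hne
    · exact h1
  have hv1 : 1 ≤ v := by
    rcases Nat.eq_zero_or_pos v with rfl | h1
    · exfalso; exact hne (Function.iterate_fixed h.1 k)
    · exact h1
  have hdv : 1 ≤ dp φ v := dp_pos h hv1 hv
  rcases le_or_gt k (dp φ v) with hk2 | hk2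
  · rw [iter_dp h hv k hk2]; omega
  · have : φ^[k] v = 0 := by
      have e : φ^[k] v = φ^[k - dp φ v] (φ^[dp φ v] v) := by
        rw [← Function.iterate_add_apply]; congr 1; omega
      rw [e, iter_dp_zero h hv, Function.iterate_fixed h.1]
    rw [this, dp_zero]; omega

end Lemmas

section Astar
variable {n : ℕ} {α φ : ℕ → ℕ}

lemma inc_mono (hα : IsInc n α) {i j : ℕ} (hij : i ≤ j) (hj : j ≤ n) :
    α i ≤ α j := by
  rcases eq_or_lt_of_le hij with rfl | h
  · exact le_rfl
  · exact le_of_lt (hα.2 i j h hj)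

lemma inc_le_iff (hα : IsInc n α) {i j : ℕ} (hi : i ≤ n) (hj : j ≤ n) :
    α i ≤ α j ↔ i ≤ j := by
  constructor
  · intro h; by_contra hc
    exact absurd (hα.2 j i (by omega) hi) (by omega)
  · intro h; exact inc_mono hα h hj

lemma inc_pos (hα : IsInc n α) {i : ℕ} (h1 : 1 ≤ i) (hi : i ≤ n) :
    1 ≤ α i := by
  have := hα.2 0 i h1 hi; rw [hα.1] at this; omega

lemma astar_zero (α φ : ℕ → ℕ) : astar α φ 0 = 0 := by simp [astar]

lemma astar_heap (hα : IsInc n α) (hφ : IsHeap (α n) φ) :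
    IsHeap n (astar α φ) := by
  classical
  refine ⟨astar_zero α φ, fun j h1 _ => ?_⟩
  rw [astar, if_neg (by omega)]
  have := Nat.findGreatest_le (P := fun i => 1 ≤ i ∧ hle φ (α i) (α j)) (j - 1)
  omega

lemma astar_spec (hα : IsInc n α) (hφ : IsHeap (α n) φ) {j : ℕ}
    (h1 : 1 ≤ j) (hjn : j ≤ n) : hle φ (α (astar α φ j)) (α j) := by
  classical
  rcases Nat.eq_zero_or_pos (astar α φ j) with h0 | hpos
  · rw [h0, hα.1]
    exact hle_zero hφ (inc_mono hα hjn le_rfl)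
  · have : astar α φ j = Nat.findGreatest
        (fun i => 1 ≤ i ∧ hle φ (α i) (α j)) (j - 1) := by
      rw [astar, if_neg (by omega)]
    exact (Nat.findGreatest_of_ne_zero this.symm (by omega)).2

lemma astar_ge (hα : IsInc n α) (hφ : IsHeap (α n) φ) {i j : ℕ}
    (h1 : 1 ≤ i) (hij : i < j) (hh : hle φ (α i) (α j)) :
    i ≤ astar α φ j := by
  classical
  rw [astar, if_neg (by omega)]
  exact Nat.le_findGreatest (by omega) ⟨h1, hh⟩

/-- Main structure lemma: the order of `astar α φ` is the pullback of that
of `φ` along `α`. -/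
lemma astar_hle_iff (hα : IsInc n α) (hφ : IsHeap (α n) φ) :
    ∀ j, j ≤ n → ∀ i, 1 ≤ i → i ≤ n →
      (hle (astar α φ) i j ↔ hle φ (α i) (α j)) := by
  have hψ := astar_heap hα hφ
  -- forward direction, by induction on the iterate count
  have fwd : ∀ k j, j ≤ n → 1 ≤ (astar α φ)^[k] j →
      hle φ (α ((astar α φ)^[k] j)) (α j) := by
    intro k
    induction k with
    | zero => intro j _ _; exact hle_refl φ (α j)
    | succ k IH =>
      intro j hjn hpos
      rw [Function.iterate_succ_apply] at *
      have hj1 : 1 ≤ j := by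
        by_contra hc
        have h0 : j = 0 := by omega
        rw [h0, astar_zero, Function.iterate_fixed (astar_zero α φ)] at hpos
        omega
      have hq1 : 1 ≤ astar α φ j := by
        by_contra hc
        have h0 : astar α φ j = 0 := by omega
        rw [h0, Function.iterate_fixed (astar_zero α φ)] at hpos
        omega
      have hqn : astar α φ j ≤ n := by
        have := hψ.2 j hj1 hjn; omega
      exact hle_trans (IH (astar α φ j) hqn hpos) (astar_spec hα hφ hj1 hjn)
  intro j
  induction j using Nat.strong_induction_on with
  | _ j IH =>
    intro hjn i hi1 hin
    constructor
    · rintro ⟨k, hk⟩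
      have := fwd k j hjn (by omega)
      rwa [← hk] at this
    · intro hh
      have hij : i ≤ j := by
        rw [← inc_le_iff hα hin hjn]
        exact hle_le hφ (inc_mono hα hjn le_rfl) hh
      rcases eq_or_lt_of_le hij with rfl | hlt
      · exact hle_refl _ _
      · have hj1 : 1 ≤ j := by omega
        have hq1 : 1 ≤ astar α φ j := le_trans hi1 (astar_ge hα hφ hi1 hlt hh)
        have hqlt : astar α φ j < j := hψ.2 j hj1 hjn
        have hqn : astar α φ j ≤ n := by omega
        have hspec := astar_spec hα hφ hj1 hjn
        rcases hle_total hh hspec with hca | hca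
        · -- α i ≼ α (astar j)
          have := (IH (astar α φ j) hqlt hqn i hi1 hin).2 hca
          exact hle_trans this ⟨1, by simp⟩
        · -- astar j ≼ i, so they are equal
          have h1 : astar α φ j ≤ i := by
            rw [← inc_le_iff hα hqn hin]
            exact hle_le hφ (inc_mono hα hin le_rfl) hca
          have h2 : i ≤ astar α φ j := astar_ge hα hφ hi1 hlt hh
          have : i = astar α φ j := by omega
          exact ⟨1, by simp [this]⟩

end Astar

section Main
variable {n : ℕ} {α φ : ℕ → ℕ}

lemma aphiFam_zero (α φ : ℕ → ℕ) (p : ℕ) : aphiFam α φ p 0 = 0 := rfl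

lemma aphiFam_of_ne (α φ : ℕ → ℕ) (p : ℕ) {i : ℕ} (hi : i ≠ 0) :
    aphiFam α φ p i = dp φ (α ((astar α φ)^[dp (astar α φ) p - i] p)) :=
  if_neg hi

theorem aphiFam_isInc' (n : ℕ) (α φ : ℕ → ℕ)
    (hα : IsInc n α) (hφ : IsHeap (α n) φ)
    (p : ℕ) (hp1 : 1 ≤ p) (hpn : p ≤ n) :
    (IsInc (dp (astar α φ) p) (aphiFam α φ p) ∧
      aphiFam α φ p (dp (astar α φ) p) = dp φ (α p)) ∧
    (∀ i, 1 ≤ i → i ≤ dp φ (α p) →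
      ((∃ j, j ≤ dp (astar α φ) p ∧ aphiFam α φ p j = i) ↔
        (∃ j, j ≤ n ∧ α j = φ^[dp φ (α p) - i] (α p)))) ∧
    (1 ≤ astar α φ p →
      2 ≤ dp (astar α φ) p ∧
      dp (astar α φ) (astar α φ p) = dp (astar α φ) p - 1 ∧
      (∀ j, 1 ≤ j →
        (hle (astar α φ) j (astar α φ p) ↔ hle (astar α φ) j p ∧ j ≠ p)) ∧
      ∀ i, i ≤ dp (astar α φ) p - 1 →
        aphiFam α φ (astar α φ p) i = aphiFam α φ p i) := by
  have hψ : IsHeap n (astar α φ) := astar_heap hα hφ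
  have hαpn : α p ≤ α n := inc_mono hα hpn le_rfl
  -- abbreviations (as plain facts)
  have hm1 : 1 ≤ dp (astar α φ) p := dp_pos hψ hp1 hpn
  have hiterle : ∀ k, (astar α φ)^[k] p ≤ p := iter_le hψ hpn
  have hdpiter : ∀ k, k ≤ dp (astar α φ) p →
      dp (astar α φ) ((astar α φ)^[k] p) = dp (astar α φ) p - k :=
    iter_dp hψ hpn
  have hpositer : ∀ k, k < dp (astar α φ) p → 1 ≤ (astar α φ)^[k] p := by
    intro k hk
    by_contra hc
    have h0 : (astar α φ)^[k] p = 0 := by omega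
    have := hdpiter k (by omega)
    rw [h0, dp_zero] at this
    omega
  -- part (a)
  have keymono : ∀ i j, 1 ≤ i → i < j → j ≤ dp (astar α φ) p →
      aphiFam α φ p i < aphiFam α φ p j := by
    intro i j hi1 hij hjm
    rw [aphiFam_of_ne α φ p (by omega), aphiFam_of_ne α φ p (by omega)]
    have han : (astar α φ)^[dp (astar α φ) p - i] p ≤ n :=
      le_trans (hiterle _) hpn
    have hbn : (astar α φ)^[dp (astar α φ) p - j] p ≤ n :=
      le_trans (hiterle _) hpn
    have ha1 : 1 ≤ (astar α φ)^[dp (astar α φ) p - i] p :=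
      hpositer _ (by omega)
    have hb1 : 1 ≤ (astar α φ)^[dp (astar α φ) p - j] p :=
      hpositer _ (by omega)
    have hab : hle (astar α φ) ((astar α φ)^[dp (astar α φ) p - i] p)
        ((astar α φ)^[dp (astar α φ) p - j] p) := by
      refine ⟨j - i, ?_⟩
      rw [← Function.iterate_add_apply,
        show j - i + (dp (astar α φ) p - j) = dp (astar α φ) p - i by omega]
    have hane : (astar α φ)^[dp (astar α φ) p - i] p ≠
        (astar α φ)^[dp (astar α φ) p - j] p := by
      intro hc
      have e1 := hdpiter (dp (astar α φ) p - i) (by omega)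
      have e2 := hdpiter (dp (astar α φ) p - j) (by omega)
      rw [hc] at e1
      omega
    have hαab := (astar_hle_iff hα hφ _ hbn _ ha1 han).1 hab
    have hαne : α ((astar α φ)^[dp (astar α φ) p - i] p) ≠
        α ((astar α φ)^[dp (astar α φ) p - j] p) := by
      intro hc
      exact hane (le_antisymm
        ((inc_le_iff hα han hbn).1 (le_of_eq hc))
        ((inc_le_iff hα hbn han).1 (le_of_eq hc.symm)))
    exact hle_dp_lt hφ (inc_mono hα hbn le_rfl) hαab hαne
  have parta1 : IsInc (dp (astar α φ) p) (aphiFam α φ p) := by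
    refine ⟨aphiFam_zero α φ p, fun i j hij hjm => ?_⟩
    rcases Nat.eq_zero_or_pos i with rfl | hi1
    · rw [aphiFam_zero, aphiFam_of_ne α φ p (by omega)]
      have han : (astar α φ)^[dp (astar α φ) p - j] p ≤ n :=
        le_trans (hiterle _) hpn
      have ha1 : 1 ≤ (astar α φ)^[dp (astar α φ) p - j] p :=
        hpositer _ (by omega)
      exact dp_pos hφ (inc_pos hα ha1 han) (inc_mono hα han le_rfl)
    · exact keymono i j hi1 hij hjm
  have parta2 : aphiFam α φ p (dp (astar α φ) p) = dp φ (α p) := by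
    rw [aphiFam_of_ne α φ p (by omega), Nat.sub_self]
    rfl
  refine ⟨⟨parta1, parta2⟩, ?_, ?_⟩
  -- part (b)
  · intro i hi1 hil
    constructor
    · rintro ⟨j, hjm, hval⟩
      have hj1 : 1 ≤ j := by
        by_contra hc
        have h0 : j = 0 := by omega
        rw [h0, aphiFam_zero] at hval
        omega
      rw [aphiFam_of_ne α φ p (by omega)] at hval
      have han : (astar α φ)^[dp (astar α φ) p - j] p ≤ n :=
        le_trans (hiterle _) hpn
      have ha1 : 1 ≤ (astar α φ)^[dp (astar α φ) p - j] p :=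
        hpositer _ (by omega)
      have hhα := (astar_hle_iff hα hφ p hpn _ ha1 han).1
        ⟨dp (astar α φ) p - j, rfl⟩
      obtain ⟨k, hk⟩ := hhα
      have hαa1 : 1 ≤ α ((astar α φ)^[dp (astar α φ) p - j] p) :=
        inc_pos hα ha1 han
      have hklt : k < dp φ (α p) := iter_lt_dp hφ hαpn (by omega)
      have hdk := iter_dp hφ hαpn k (le_of_lt hklt)
      rw [← hk, hval] at hdk
      refine ⟨(astar α φ)^[dp (astar α φ) p - j] p, han, ?_⟩
      rw [show dp φ (α p) - i = k by omega]
      exact hk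
    · rintro ⟨j, hjn, hval⟩
      have hdk := iter_dp hφ hαpn (dp φ (α p) - i) (by omega)
      rw [← hval] at hdk
      have hdj : dp φ (α j) = i := by omega
      have hαj1 : 1 ≤ α j := by
        by_contra hc
        have h0 : α j = 0 := by omega
        rw [h0, dp_zero] at hdj
        omega
      have hj1 : 1 ≤ j := by
        by_contra hc
        have h0 : j = 0 := by omega
        rw [h0, hα.1] at hαj1
        omega
      have hhψ : hle (astar α φ) j p :=
        (astar_hle_iff hα hφ p hpn j hj1 hjn).2 ⟨dp φ (α p) - i, hval⟩
      obtain ⟨k, hk⟩ := hhψ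
      have hklt : k < dp (astar α φ) p := iter_lt_dp hψ hpn (by omega)
      refine ⟨dp (astar α φ) p - k, by omega, ?_⟩
      rw [aphiFam_of_ne α φ p (by omega),
        show dp (astar α φ) p - (dp (astar α φ) p - k) = k by omega, ← hk]
      exact hdj
  -- part (c)
  · intro hq1
    have hqlt : astar α φ p < p := hψ.2 p hp1 hpn
    have hqn : astar α φ p ≤ n := by omega
    have hdq : dp (astar α φ) p = dp (astar α φ) (astar α φ p) + 1 :=
      dp_succ hψ hp1 hpn
    have hdq1 : 1 ≤ dp (astar α φ) (astar α φ p) := dp_pos hψ hq1 hqn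
    refine ⟨by omega, by omega, ?_, ?_⟩
    · intro j hj1
      constructor
      · intro hh
        constructor
        · exact hle_trans hh ⟨1, rfl⟩
        · intro hc
          have hle1 : j ≤ astar α φ p := hle_le hψ hqn hh
          omega
      · rintro ⟨⟨k, hk⟩, hne⟩
        have hk1 : 1 ≤ k := by
          rcases Nat.eq_zero_or_pos k with rfl | h
          · simp at hk; omega
          · exact h
        refine ⟨k - 1, ?_⟩
        rw [hk]
        conv_lhs => rw [show k = (k - 1) + 1 by omega]
        rw [Function.iterate_succ_apply]
    · intro i him
      rcases Nat.eq_zero_or_pos i with rfl | hi1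
      · rw [aphiFam_zero, aphiFam_zero]
      · rw [aphiFam_of_ne α φ _ (by omega), aphiFam_of_ne α φ p (by omega),
          show dp (astar α φ) (astar α φ p) = dp (astar α φ) p - 1 by omega,
          ← Function.iterate_succ_apply, Nat.succ_eq_add_one,
          show (dp (astar α φ) p - 1 - i) + 1 = dp (astar α φ) p - i by omega]

end Main

/-- **Statement 14.** Let `α ∈ Inc(n)`, `φ ∈ Hp(α(n))`, `p ∈ {1,…,n}`.  With
`m = dp_{α*φ}(p)`, the `≼_{α*φ}`-downset of `p` in increasing order is
`p_i = (α*φ)^[m−i](p)`, and the `≼_φ`-downset of `α(p)` in increasing order is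
`v_i = φ^[ℓ−i](α(p))` where `ℓ = dp_φ(α(p))`.  Then:
(a) `α^φ_p` (encoded by `aphiFam α φ p`) is an inc-list of length `m` with
value `ℓ` at `m`;
(b) for `i ∈ {1,…,ℓ}`, `i ∈ im α^φ_p` iff `v_i ∈ im α`;
(c) if `(α*φ)(p) = q ≥ 1` then `m ≥ 2`, the `≼_{α*φ}`-downset of `q` is that
of `p` with `p` removed (so `dp_{α*φ}(q) = m − 1`), and `α^φ_q` is the
restriction of `α^φ_p` to `{0,…,m−1}`. -/
theorem aphiFam_isInc (n : ℕ) (α φ : ℕ → ℕ)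
    (hα : IsInc n α) (hφ : IsHeap (α n) φ)
    (p : ℕ) (hp1 : 1 ≤ p) (hpn : p ≤ n) :
    (IsInc (dp (astar α φ) p) (aphiFam α φ p) ∧
      aphiFam α φ p (dp (astar α φ) p) = dp φ (α p)) ∧
    (∀ i, 1 ≤ i → i ≤ dp φ (α p) →
      ((∃ j, j ≤ dp (astar α φ) p ∧ aphiFam α φ p j = i) ↔
        (∃ j, j ≤ n ∧ α j = φ^[dp φ (α p) - i] (α p)))) ∧
    (1 ≤ astar α φ p →
      2 ≤ dp (astar α φ) p ∧
      dp (astar α φ) (astar α φ p) = dp (astar α φ) p - 1 ∧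
      (∀ j, 1 ≤ j →
        (hle (astar α φ) j (astar α φ p) ↔ hle (astar α φ) j p ∧ j ≠ p)) ∧
      ∀ i, i ≤ dp (astar α φ) p - 1 →
        aphiFam α φ (astar α φ p) i = aphiFam α φ p i) := by
  exact aphiFam_isInc' n α φ hα hφ p hp1 hpn
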